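/- Let (a, x) and (b, y) be pairs of coprime integers with 1 ≤ a ≤ x, 1 ≤ b ≤ y, and ay - bx = 1. Then (y+x, b+a)_q = (y, b)_q + q^{⌊b/a + 1⌋} · (x, a)_q. -/

import Mathlib

open Polynomial

/-- The `q`-integer `[c]_q = 1 + q + ⋯ + q^{c-1}` as a polynomial in `ℤ[q]`. -/
noncomputable def qInt (c : ℕ) : Polynomial ℤ := ∑ i ∈ Finset.range c, X ^ i

/-- The polynomial `(a, b)_q ∈ ℤ[q]` associated to a pair of coprime positive
integers: `(1, n)_q = (n, 1)_q = [n+1]_q`; if `a < b` then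
`(a,b)_q = (a-r, r)_q + q·(a, b-a)_q` with `r = b % a`; if `a > b` then
`(a,b)_q = (a-b, b)_q + q^⌈a/b⌉·(r, b-r)_q` with `r = a % b`.
(Values on non-coprime or zero inputs are junk.) -/
noncomputable def W : ℕ → ℕ → Polynomial ℤ
  | 1, b => qInt (b + 1)
  | a, 1 => qInt (a + 1)
  | 0, _ => 0
  | _, 0 => 0
  | a + 2, b + 2 =>
    if a < b then
      W (a + 2 - (b + 2) % (a + 2)) ((b + 2) % (a + 2)) + X * W (a + 2) (b - a)
    else
      W (a - b) (b + 2) +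
        X ^ ((a + 2 + (b + 2) - 1) / (b + 2)) *
          W ((a + 2) % (b + 2)) (b + 2 - (a + 2) % (b + 2))
  termination_by a b => a + b
  decreasing_by
  · have := Nat.mod_lt (b + 2) (show 0 < a + 2 by omega); omega
  · omega
  · omega
  · have := Nat.mod_lt (a + 2) (show 0 < b + 2 by omega); omega

/-- The sequence of digits of the negative continued fraction expansion
`x/a = [c₁, …, c_l]⁻` (each `cᵢ = ⌈·⌉` of the current fraction). By convention
`ncfDigits x 0 = []` (for `1/0 = ∞`) and `ncfDigits x 1 = [x]`. -/
def ncfDigits : ℕ → ℕ → List ℕ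
  | _, 0 => []
  | x, 1 => [x]
  | x, a + 2 =>
      (x + (a + 2) - 1) / (a + 2) ::
        ncfDigits (a + 2) ((x + (a + 2) - 1) / (a + 2) * (a + 2) - x)
  termination_by x a => a
  decreasing_by
    have := Nat.div_mul_le_self (x + (a + 2) - 1) (a + 2); omega

/-- The (coprime) numerator and denominator of the Morier-Genoud–Ovsienko
`q`-deformation of the negative continued fraction `[c₁, …, c_l]⁻`, computed by
the continuant recursion `(N, D) ↦ ([c]_q·N - q^{c-1}·D, N)`, with `(1, 0)` for
the empty list. -/
noncomputable def qCF : List ℕ → Polynomial ℤ × Polynomial ℤ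
  | [] => (1, 0)
  | c :: rest =>
      let p := qCF rest
      (qInt c * p.1 - X ^ (c - 1) * p.2, p.1)

/-- Numerator `N_q(x/a)` of the Morier-Genoud–Ovsienko `q`-rational `[x/a]_q`. -/
noncomputable def Nq (x a : ℕ) : Polynomial ℤ := (qCF (ncfDigits x a)).1

/-- Denominator `D_q(x/a)` of the Morier-Genoud–Ovsienko `q`-rational `[x/a]_q`. -/
noncomputable def Dq (x a : ℕ) : Polynomial ℤ := (qCF (ncfDigits x a)).2

/-- The normalized Jones polynomial `J_{x/a}(q) = q·N_q(x/a) + (1-q)·D_q(x/a)`. -/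
noncomputable def Jq (x a : ℕ) : Polynomial ℤ := X * Nq x a + (1 - X) * Dq x a

/-!
Strong induction on `a + x + b + y`, following the recursion of `W` at the mediant
`(y + x)/(b + a)`.

If `a ≤ x`, write `x = n a + u`, `y = n b + v` with `0 < u < a`. Iterating the recursion for a
first argument larger than the second gives `W (n s + r) s = W r s + q² [n]_q W r (s - r)`, which
reduces the identity for `(a, x, b, y)` to those for `(a, u, b, v)` and `(a - u, u, b - v, v)`.
If `x < a`, write `a = k x + u`, `b = k y + v`; now `W p (k p + r) = [k]_q W (p - r) r + q^k W p r`
reduces it to `(u, x, v, y)` and `(u, x - u, v, y - v)`. The exponents match because `b/a` lies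
between two Farey neighbours, between which there is no integer, so `⌊b/a⌋` is the floor of the
smaller one. The only base case is `a = 1`, where all three terms are explicit in `q`-integers.
-/

lemma qInt_zero : qInt 0 = 0 := Finset.sum_range_zero _

lemma qInt_succ (n : ℕ) : qInt (n + 1) = qInt n + X ^ n := by
  rw [qInt, geom_sum_succ', add_comm, qInt]

lemma qInt_succ' (n : ℕ) : qInt (n + 1) = X * qInt n + 1 := geom_sum_succ

lemma W_one_left (b : ℕ) : W 1 b = qInt (b + 1) := W.eq_1 b

lemma W_one_right (a : ℕ) : W a 1 = qInt (a + 1) := by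
  rcases eq_or_ne a 1 with rfl | ha
  · exact W.eq_1 1
  · exact W.eq_2 a ha

lemma W_zero_comm (s : ℕ) : W 0 s = W s 0 := by
  match s with
  | 0 => rfl
  | 1 => rw [W_one_right, W_one_left]
  | s + 2 => rw [W.eq_3 _ (by omega), W.eq_4 _ (by omega) (by omega)]

lemma W_of_lt {p s : ℕ} (hp : 0 < p) (hps : p < s) :
    W p s = W (p - s % p) (s % p) + X * W p (s - p) := by
  obtain rfl | ⟨p, rfl⟩ : p = 1 ∨ ∃ p', p = p' + 2 := by
    rcases p with _ | _ | p <;> simp_all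
  · obtain ⟨s, rfl⟩ : ∃ s', s = s' + 1 := ⟨s - 1, by omega⟩
    rw [Nat.mod_one, W_one_left, W_one_left, W_one_left, qInt_succ' (s + 1), Nat.add_sub_cancel,
      qInt_succ' 0, qInt_zero]
    ring
  · obtain ⟨s, rfl⟩ : ∃ s', s = s' + 2 := ⟨s - 2, by omega⟩
    rw [W.eq_5, if_pos (by omega), show s - p = s + 2 - (p + 2) by omega]

lemma W_of_gt {p s : ℕ} (hs : 0 < s) (hsp : s < p) :
    W p s = W (p - s) s + X ^ ((p + s - 1) / s) * W (p % s) (s - p % s) := by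
  obtain rfl | ⟨s, rfl⟩ : s = 1 ∨ ∃ s', s = s' + 2 := by
    rcases s with _ | _ | s <;> simp_all
  · obtain ⟨p, rfl⟩ : ∃ p', p = p' + 1 := ⟨p - 1, by omega⟩
    simp only [Nat.mod_one, Nat.sub_zero, Nat.div_one, Nat.add_sub_cancel, W_one_right,
      qInt_succ (p + 1), qInt_succ' 0, qInt_zero]
    ring
  · obtain ⟨p, rfl⟩ : ∃ p', p = p' + 2 := ⟨p - 2, by omega⟩
    rw [W.eq_5, if_neg (by omega), show p - s = p + 2 - (s + 2) by omega]

lemma W_sub_mod_mod_of_le {p r : ℕ} (hrp : r ≤ p) : W (p - r % p) (r % p) = W (p - r) r := by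
  rcases hrp.lt_or_eq with h | rfl
  · rw [Nat.mod_eq_of_lt h]
  · rw [Nat.mod_self, Nat.sub_self, Nat.sub_zero, W_zero_comm]

lemma W_mod_sub_mod_of_le {s r : ℕ} (hrs : r ≤ s) : W (r % s) (s - r % s) = W r (s - r) := by
  rcases hrs.lt_or_eq with h | rfl
  · rw [Nat.mod_eq_of_lt h]
  · rw [Nat.mod_self, Nat.sub_self, Nat.sub_zero, W_zero_comm]

lemma W_mul_add_right {p r : ℕ} (hrp : r ≤ p) (hr : 0 < r ∨ p = 1) (k : ℕ) :
    W p (k * p + r) = qInt k * W (p - r) r + X ^ k * W p r := by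
  rcases Nat.eq_zero_or_pos r with rfl | hr
  · obtain rfl := hr.resolve_left (lt_irrefl 0)
    simp [W_one_left, qInt_succ, qInt_zero]
  induction k with
  | zero => simp [qInt_zero]
  | succ k ih =>
    have hmod : ((k + 1) * p + r) % p = r % p := by rw [add_comm, Nat.add_mul_mod_self_right]
    have hsub : (k + 1) * p + r - p = k * p + r := by
      rw [add_mul, one_mul, add_right_comm, Nat.add_sub_cancel]
    rw [W_of_lt (by omega) (by nlinarith), hmod, hsub, W_sub_mod_mod_of_le hrp, ih, qInt_succ']
    ring

lemma W_mul_add_left {s r : ℕ} (hr : 0 < r) (hrs : r ≤ s) (k : ℕ) :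
    W (k * s + r) s = W r s + X ^ 2 * qInt k * W r (s - r) := by
  induction k with
  | zero => simp [qInt_zero]
  | succ k ih =>
    have hceil : ((k + 1) * s + r + s - 1) / s = k + 2 := by
      rw [show (k + 1) * s + r + s - 1 = (k + 2) * s + (r - 1) by
        rw [show (k + 2) * s = (k + 1) * s + s by ring]; omega]
      have : r - 1 < s := by omega
      exact Nat.div_eq_of_lt_le (by nlinarith) (by nlinarith)
    have hmod : ((k + 1) * s + r) % s = r % s := by rw [add_comm, Nat.add_mul_mod_self_right]
    have hsub : (k + 1) * s + r - s = k * s + r := by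
      rw [add_mul, one_mul, add_right_comm, Nat.add_sub_cancel]
    rw [W_of_gt (by omega) (by nlinarith), hceil, hmod, hsub, W_mod_sub_mod_of_le hrs, ih,
      qInt_succ]
    ring

lemma W_mul_add_one_left (k s : ℕ) : W (k * s + 1) s = qInt (s + 1) + X ^ 2 * qInt k * qInt s := by
  rcases Nat.eq_zero_or_pos s with rfl | hs
  · simp [W_one_left, qInt_zero]
  · rw [W_mul_add_left Nat.one_pos hs, W_one_left, W_one_left, Nat.sub_add_cancel hs]

lemma Nat.add_mul_div_add_mul_eq_div {u v c d : ℕ} (hu : 0 < u) (hc : 0 < c)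
    (h : u * d = v * c + 1) (k : ℕ) : (v + k * d) / (u + k * c) = v / u := by
  set m := v / u
  have hmu : m * u ≤ v := Nat.div_mul_le_self v u
  have hum : v < (m + 1) * u := by rw [mul_comm]; exact Nat.lt_mul_div_succ v hu
  have hmc : m * c < d := by
    have : u * (m * c) < u * d := by nlinarith
    exact Nat.lt_of_mul_lt_mul_left this
  have hcm : d ≤ (m + 1) * c := by nlinarith
  exact Nat.div_eq_of_lt_le (by nlinarith) (by nlinarith)

def FareyIdentity (a x b y : ℕ) : Prop :=
  W (y + x) (b + a) = W y b + X ^ (b / a + 1) * W x a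

lemma fareyIdentity_one_left (b x : ℕ) : FareyIdentity 1 x b (b * x + 1) := by
  rw [FareyIdentity, show b * x + 1 + x = x * (b + 1) + 1 by ring, mul_comm b x,
    W_mul_add_one_left, W_mul_add_one_left, W_one_right, Nat.div_one]
  linear_combination qInt_succ (b + 1) + X ^ 2 * qInt x * qInt_succ b - X ^ (b + 1) * qInt_succ' x

lemma FareyIdentity.translate_num {a₀ u b₀ v : ℕ} (hu : 0 < u) (h : a₀ * v = b₀ * u + 1)
    (h₁ : FareyIdentity (a₀ + u) u (b₀ + v) v) (h₂ : FareyIdentity a₀ u b₀ v) (n : ℕ) :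
    FareyIdentity (a₀ + u) (n * (a₀ + u) + u) (b₀ + v) (n * (b₀ + v) + v) := by
  have ha₀ : 0 < a₀ := Nat.pos_of_ne_zero (by rintro rfl; simp at h)
  have hv : 0 < v := Nat.pos_of_ne_zero (by rintro rfl; simp at h)
  have hdiv : (b₀ + v) / (a₀ + u) = b₀ / a₀ := by
    simpa using Nat.add_mul_div_add_mul_eq_div ha₀ hu h 1
  unfold FareyIdentity at *
  rw [show n * (b₀ + v) + v + (n * (a₀ + u) + u) = n * (b₀ + v + (a₀ + u)) + (v + u) by ring,
    W_mul_add_left (by omega) (by omega), W_mul_add_left hv (by omega),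
    W_mul_add_left hu (by omega), h₁, hdiv,
    show b₀ + v + (a₀ + u) - (v + u) = b₀ + a₀ by omega, Nat.add_sub_cancel,
    Nat.add_sub_cancel, h₂]
  ring

lemma FareyIdentity.translate_den {u x₀ v y₀ : ℕ} (h : u * y₀ = v * x₀ + 1)
    (h₁ : FareyIdentity u x₀ v y₀) (h₂ : FareyIdentity u (x₀ + u) v (y₀ + v)) (k : ℕ) :
    FareyIdentity (k * (x₀ + u) + u) (x₀ + u) (k * (y₀ + v) + v) (y₀ + v) := by
  have hu : 0 < u := Nat.pos_of_ne_zero (by rintro rfl; simp at h)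
  have hv : 0 < v ∨ y₀ + v = 1 := by
    rcases Nat.eq_zero_or_pos v with rfl | hv
    · simp only [zero_mul, zero_add] at h
      exact .inr (by simpa using Nat.eq_one_of_mul_eq_one_left h)
    · exact .inl hv
  have hdiv : (k * (y₀ + v) + v) / (k * (x₀ + u) + u) = v / u := by
    rw [add_comm, add_comm _ u]
    exact Nat.add_mul_div_add_mul_eq_div hu (by omega) (by linarith) k
  unfold FareyIdentity at *
  rw [show k * (y₀ + v) + v + (k * (x₀ + u) + u) = k * (y₀ + v + (x₀ + u)) + (v + u) by ring,
    W_mul_add_right (by omega) (.inl (by omega)), W_mul_add_right (by omega) hv,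
    W_mul_add_right (by omega) (.inl hu), hdiv,
    show y₀ + v + (x₀ + u) - (v + u) = y₀ + x₀ by omega, Nat.add_sub_cancel,
    Nat.add_sub_cancel, h₁, h₂]
  ring

lemma exists_translate_num {a x b y : ℕ} (h : a * y = b * x + 1) (ha : a ≠ 1) (hax : a ≤ x) :
    ∃ n a₀ u b₀ v, 0 < n ∧ 0 < u ∧ a₀ * v = b₀ * u + 1 ∧
      a = a₀ + u ∧ b = b₀ + v ∧ x = n * a + u ∧ y = n * b + v := by
  have ha₀ : 0 < a := Nat.pos_of_ne_zero (by rintro rfl; simp at h)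
  obtain ⟨n, u, hua, rfl⟩ : ∃ n u, u < a ∧ x = n * a + u :=
    ⟨x / a, x % a, Nat.mod_lt x ha₀, by rw [mul_comm]; exact (Nat.div_add_mod x a).symm⟩
  have hn : 0 < n := Nat.pos_of_ne_zero (by rintro rfl; omega)
  have hny : n * b < y := Nat.lt_of_mul_lt_mul_left (a := a) (by nlinarith)
  obtain ⟨v, rfl⟩ : ∃ v, y = n * b + v := ⟨y - n * b, by omega⟩
  have hv : a * v = b * u + 1 := by nlinarith
  have hu : 0 < u := Nat.pos_of_ne_zero fun hu =>
    ha (Nat.eq_one_of_mul_eq_one_right (by simpa [hu] using hv))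
  have hb : 0 < b := Nat.pos_of_ne_zero fun hb =>
    ha (Nat.eq_one_of_mul_eq_one_right (by simpa [hb] using hv))
  have hvb : v ≤ b := by nlinarith
  refine ⟨n, a - u, u, b - v, v, hn, hu, ?_, by omega, by omega, rfl, rfl⟩
  zify [hua.le, hvb]
  linear_combination (by exact_mod_cast hv : (a : ℤ) * v = b * u + 1)

lemma exists_translate_den {a x b y : ℕ} (h : a * y = b * x + 1) (ha : a ≠ 1) (hxa : x < a) :
    ∃ k u x₀ v y₀, 0 < k ∧ 0 < u ∧ u * y₀ = v * x₀ + 1 ∧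
      x = x₀ + u ∧ y = y₀ + v ∧ a = k * x + u ∧ b = k * y + v := by
  have hx : 0 < x := Nat.pos_of_ne_zero fun hx =>
    ha (Nat.eq_one_of_mul_eq_one_right (by simpa [hx] using h))
  have hy : 0 < y := Nat.pos_of_ne_zero (by rintro rfl; simp at h)
  obtain ⟨k, r, hrx, hk⟩ : ∃ k r, r < x ∧ a - 1 = k * x + r :=
    ⟨(a - 1) / x, (a - 1) % x, Nat.mod_lt _ hx, by rw [mul_comm]; exact (Nat.div_add_mod _ _).symm⟩
  obtain rfl : a = k * x + (r + 1) := by omega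
  have hk : 0 < k := Nat.pos_of_ne_zero (by rintro rfl; omega)
  have hky : k * y ≤ b := by
    have : x * (k * y) ≤ x * b := by nlinarith [Nat.mul_pos (Nat.succ_pos r) hy]
    exact Nat.le_of_mul_le_mul_left this hx
  obtain ⟨v, rfl⟩ : ∃ v, b = k * y + v := ⟨b - k * y, by omega⟩
  have hv : (r + 1) * y = v * x + 1 := by nlinarith
  have hvy : v ≤ y := by nlinarith
  refine ⟨k, r + 1, x - (r + 1), v, y - v, hk, by omega, ?_, by omega, by omega, rfl, rfl⟩
  zify [(by omega : r + 1 ≤ x), hvy]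
  linear_combination (by exact_mod_cast hv : ((r : ℤ) + 1) * y = v * x + 1)

theorem fareyIdentity_of_mul_eq {a x b y : ℕ} (h : a * y = b * x + 1) : FareyIdentity a x b y := by
  induction hs : a + x + b + y using Nat.strong_induction_on generalizing a x b y with
  | _ s ih =>
  subst hs
  rcases eq_or_ne a 1 with rfl | ha
  · obtain rfl : y = b * x + 1 := by simpa using h
    exact fareyIdentity_one_left b x
  rcases le_or_gt a x with hax | hxa
  · obtain ⟨n, a₀, u, b₀, v, hn, hu, hdet, rfl, rfl, rfl, rfl⟩ := exists_translate_num h ha hax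
    exact FareyIdentity.translate_num hu hdet (ih _ (by nlinarith) (by linarith) rfl)
      (ih _ (by nlinarith) hdet rfl) n
  · obtain ⟨k, u, x₀, v, y₀, hk, hu, hdet, rfl, rfl, rfl, rfl⟩ := exists_translate_den h ha hxa
    exact FareyIdentity.translate_den hdet (ih _ (by nlinarith) hdet rfl)
      (ih _ (by nlinarith) (by linarith) rfl) k

theorem W_farey_sum_swap_general (a x b y : ℕ)
    (h : a * y = b * x + 1) :
    W (y + x) (b + a) = W y b + X ^ (b / a + 1) * W x a :=
  fareyIdentity_of_mul_eq h

/-- For Farey neighbors `x/a`, `y/b ≥ 1` (`ay - bx = 1`):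
`(y+x, b+a)_q = (y, b)_q + q^{⌊b/a + 1⌋}·(x, a)_q` (here `⌊b/a + 1⌋ = b/a + 1`). -/
theorem W_farey_sum_swap (a x b y : ℕ)
    (ha : 1 ≤ a) (hax : a ≤ x) (hb : 1 ≤ b) (hby : b ≤ y)
    (h : a * y = b * x + 1) :
    W (y + x) (b + a) = W y b + X ^ (b / a + 1) * W x a :=
  W_farey_sum_swap_general a x b y h
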